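/- Let A be a finite local ring with involution * such that 2 is a unit and a − a* lies in the Jacobson radical r for every a ∈ A, let S = {a ∈ A : a* = −a}, and let m ≥ 1. Then for every s ∈ S, the number of unimodular column vectors v ∈ A^{2m} with length vᴴJ₀v = s equals (|A|^{2m} − |r|^{2m})/|S|; in particular this number is independent of s. -/

import Mathlib

/-!
For `v` with `v i` a unit and `d = -(star (v i))⁻¹ x`, the vector `v + J (eᵢ d)` has length
`vᴴJv + (x - star x)`. If `x` lies in the radical, this perturbation does not change which
coordinates are units, so performing it at a unit coordinate chosen from that set alone is a
bijection of unimodular vectors, with inverse the same move for `-x`. Since `2` is a unit, the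
difference `t - s` of two skew elements is `x - star x` for `x = (t - s) / 2`, which lies in the
radical. Hence all fibres of the length map from the unimodular vectors onto `S` have the same
size, and there are `|A|^{2m} - |r|^{2m}` unimodular vectors.
-/

open Matrix

/-- The standard symplectic matrix `J₀ ∈ M_{2m}(A)`: the 2×2 block matrix
`[[0, I_m], [-I_m, 0]]` with `m × m` blocks. -/
def stdSymplectic (A : Type*) [Ring A] (m : ℕ) : Matrix (Fin (2 * m)) (Fin (2 * m)) A :=
  Matrix.of fun i j =>
    if (i : ℕ) + m = (j : ℕ) then (1 : A)
    else if (j : ℕ) + m = (i : ℕ) then (-1 : A) else 0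

theorem mul_mem_nonunits_of_right {M : Type*} [Monoid M] [IsDedekindFiniteMonoid M] (a : M)
    {b : M} (hb : b ∈ nonunits M) : a * b ∈ nonunits M :=
  fun h => hb (isUnit_of_mul_isUnit_right h)

theorem IsLocalRing.isUnit_add_iff_of_mem_nonunits {R : Type*} [Ring R] [IsLocalRing R] {a b : R}
    (hb : b ∈ nonunits R) : IsUnit (a + b) ↔ IsUnit a := by
  refine ⟨fun h => (IsLocalRing.isUnit_or_isUnit_of_isUnit_add h).resolve_right hb,
    fun ha => by_contra fun hab => ?_⟩
  have hb' : -b ∈ nonunits R := fun h => hb ((IsUnit.neg_iff b).mp h)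
  exact (add_neg_cancel_right a b ▸ IsLocalRing.nonunits_add hab hb') ha

theorem exists_star_eq_neg_two_mul_eq {A : Type*} [Ring A] [StarRing A] {y : A}
    (h2 : IsUnit (2 : A)) (hy : star y = -y) : ∃ x : A, star x = -x ∧ 2 * x = y := by
  obtain ⟨u, hu⟩ := h2
  have hstar : star u = u := Units.ext (by simp [hu])
  have hcomm : Commute (↑u⁻¹ : A) y := (hu ▸ Commute.ofNat_left 2 y).units_inv_left
  refine ⟨↑u⁻¹ * y, ?_, by rw [← hu, Units.mul_inv_cancel_left]⟩
  rw [star_mul, hy, ← Units.coe_star_inv, hstar, neg_mul, hcomm.eq]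

theorem card_eq_mul_card_of_forall_card_fiber_eq {α β : Type*} [Finite α] [Finite β]
    (f : α → β) {k : ℕ} (h : ∀ b, Nat.card {a // f a = b} = k) :
    Nat.card α = k * Nat.card β := by
  have := Fintype.ofFinite β
  rw [← Nat.card_congr (Equiv.sigmaFiberEquiv f), Nat.card_sigma]
  simp [h, Nat.card_eq_fintype_card, mul_comm]

abbrev UnimodularVec (n A : Type*) [Monoid A] := {v : n → A // ∃ i, IsUnit (v i)}

theorem card_unimodularVec {M n : Type*} [Monoid M] [Finite M] [Fintype n] :
    Nat.card (UnimodularVec n M) =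
      Nat.card M ^ Fintype.card n - Nat.card (nonunits M) ^ Fintype.card n := by
  classical
  have := Fintype.ofFinite M
  have e : UnimodularVec n M ≃ {v : n → M // ¬ ∀ i, v i ∈ nonunits M} :=
    Equiv.subtypeEquivRight fun v => by simp [mem_nonunits_iff]
  rw [Nat.card_congr e, Nat.card_eq_fintype_card, Fintype.card_subtype_compl,
    ← Nat.card_eq_fintype_card, ← Nat.card_eq_fintype_card,
    Nat.card_congr Equiv.subtypePiEquivPi, Nat.card_fun, Nat.card_fun,
    Nat.card_eq_fintype_card (α := n)]

section Form

variable {A n : Type*} [Ring A] [StarRing A] [Fintype n]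

theorem star_dotProduct_mulVec_self_of_conjTranspose_eq_neg {J : Matrix n n A} (hJ : Jᴴ = -J)
    (v : n → A) : star (star v ⬝ᵥ J *ᵥ v) = -(star v ⬝ᵥ J *ᵥ v) := by
  rw [← star_dotProduct, star_mulVec, ← dotProduct_mulVec, hJ, neg_mulVec, dotProduct_neg]

variable [DecidableEq n]

theorem dotProduct_mulVec_add_mulVec_single {J : Matrix n n A} (hJ : Jᴴ = -J) (hJJ : J * J = -1)
    (hdiag : ∀ i, J i i = 0) (v : n → A) (i : n) (d : A) :
    star (v + J *ᵥ Pi.single i d) ⬝ᵥ J *ᵥ (v + J *ᵥ Pi.single i d) =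
      star v ⬝ᵥ J *ᵥ v - star (v i) * d + star d * v i := by
  have hJJ' : Jᴴ * J = 1 := by rw [hJ, neg_mul, hJJ, neg_neg]
  have hsingle : J *ᵥ J *ᵥ Pi.single i d = -Pi.single i d := by
    rw [mulVec_mulVec, hJJ, neg_mulVec, one_mulVec]
  rw [star_add, star_mulVec, mulVec_add, hsingle, add_dotProduct, dotProduct_add, dotProduct_add,
    ← dotProduct_mulVec, ← dotProduct_mulVec, mulVec_mulVec, hJJ', one_mulVec, dotProduct_neg,
    mulVec_neg, dotProduct_neg, hJ, neg_mulVec, dotProduct_neg, neg_neg, ← Pi.single_star,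
    single_dotProduct, dotProduct_single, single_dotProduct, mulVec_single]
  simp only [Pi.star_apply, Pi.smul_apply, col_apply, hdiag, smul_zero, mul_zero, add_zero]
  abel

noncomputable def shiftAt (J : Matrix n n A) (x : A) (v : n → A) (i : n) : n → A :=
  v + J *ᵥ Pi.single i (-Ring.inverse (star (v i)) * x)

theorem dotProduct_mulVec_shiftAt {J : Matrix n n A} (hJ : Jᴴ = -J) (hJJ : J * J = -1)
    (hdiag : ∀ i, J i i = 0) (x : A) {v : n → A} {i : n} (hv : IsUnit (v i)) :
    star (shiftAt J x v i) ⬝ᵥ J *ᵥ shiftAt J x v i =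
      star v ⬝ᵥ J *ᵥ v + (x - star x) := by
  have h₁ : star (v i) * (Ring.inverse (star (v i)) * x) = x := by
    rw [← mul_assoc, Ring.mul_inverse_cancel _ hv.star, one_mul]
  have h₂ : star x * Ring.inverse (v i) * v i = star x := by
    rw [mul_assoc, Ring.inverse_mul_cancel _ hv, mul_one]
  rw [shiftAt, dotProduct_mulVec_add_mulVec_single hJ hJJ hdiag, star_mul, star_neg,
    ← Ring.inverse_star, star_star, neg_mul, mul_neg, h₁, mul_neg, neg_mul, h₂]
  abel

theorem shiftAt_apply_self {J : Matrix n n A} (hdiag : ∀ i, J i i = 0) (x : A) (v : n → A)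
    (i : n) : shiftAt J x v i i = v i := by
  simp [shiftAt, hdiag]

theorem shiftAt_shiftAt_of_eq_neg {J : Matrix n n A} (hdiag : ∀ i, J i i = 0) {x y : A}
    (hxy : y = -x) (v : n → A) (i : n) : shiftAt J y (shiftAt J x v i) i = v := by
  rw [hxy, shiftAt, shiftAt_apply_self hdiag, shiftAt, mul_neg, Pi.single_neg, mulVec_neg,
    add_neg_cancel_right]

theorem isUnit_shiftAt_apply_iff [IsLocalRing A] [IsDedekindFiniteMonoid A] (J : Matrix n n A)
    {x : A} (hx : x ∈ nonunits A) (v : n → A) (i k : n) :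
    IsUnit (shiftAt J x v i k) ↔ IsUnit (v k) := by
  refine IsLocalRing.isUnit_add_iff_of_mem_nonunits ?_
  simpa using mul_mem_nonunits_of_right _ (mul_mem_nonunits_of_right _ hx)

end Form

namespace UnimodularVec

variable {A n : Type*}

/-- A function of the set of unit coordinates of `v` alone, so that `shift` does not move it. -/
noncomputable def pivot [Monoid A] (v : UnimodularVec n A) : n :=
  Set.Nonempty.some (s := {i | IsUnit (v.1 i)}) v.2

theorem isUnit_pivot [Monoid A] (v : UnimodularVec n A) : IsUnit (v.1 v.pivot) :=
  Set.Nonempty.some_mem (s := {i | IsUnit (v.1 i)}) v.2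

theorem pivot_congr [Monoid A] {v w : UnimodularVec n A}
    (h : ∀ i, IsUnit (w.1 i) ↔ IsUnit (v.1 i)) : w.pivot = v.pivot := by
  have hset : {i | IsUnit (w.1 i)} = {i | IsUnit (v.1 i)} := Set.ext h
  unfold pivot
  congr 1

variable [Ring A] [StarRing A] [IsLocalRing A] [IsDedekindFiniteMonoid A] [Fintype n]
  [DecidableEq n]

noncomputable def shiftAtPivot (J : Matrix n n A) {x : A} (hx : x ∈ nonunits A)
    (v : UnimodularVec n A) : UnimodularVec n A :=
  ⟨shiftAt J x v.1 v.pivot, v.pivot, (isUnit_shiftAt_apply_iff J hx _ _ _).mpr v.isUnit_pivot⟩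

theorem pivot_shiftAtPivot (J : Matrix n n A) {x : A} (hx : x ∈ nonunits A)
    (v : UnimodularVec n A) : (shiftAtPivot J hx v).pivot = v.pivot :=
  pivot_congr (isUnit_shiftAt_apply_iff J hx _ _)

theorem shiftAtPivot_shiftAtPivot_of_eq_neg {J : Matrix n n A} (hdiag : ∀ i, J i i = 0) {x y : A}
    (hx : x ∈ nonunits A) (hy : y ∈ nonunits A) (hxy : y = -x) (v : UnimodularVec n A) :
    shiftAtPivot J hy (shiftAtPivot J hx v) = v :=
  Subtype.ext <| by
    change shiftAt J y (shiftAtPivot J hx v).1 (shiftAtPivot J hx v).pivot = v.1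
    rw [pivot_shiftAtPivot]
    exact shiftAt_shiftAt_of_eq_neg hdiag hxy v.1 v.pivot

noncomputable def shift {J : Matrix n n A} (hdiag : ∀ i, J i i = 0) {x : A}
    (hx : x ∈ nonunits A) : UnimodularVec n A ≃ UnimodularVec n A where
  toFun := shiftAtPivot J hx
  invFun := shiftAtPivot J ((IsUnit.neg_iff x).not.mpr hx)
  left_inv := shiftAtPivot_shiftAtPivot_of_eq_neg hdiag _ _ rfl
  right_inv := shiftAtPivot_shiftAtPivot_of_eq_neg hdiag _ _ (neg_neg x).symm

theorem card_form_eq_add_sub_star {J : Matrix n n A} (hJ : Jᴴ = -J) (hJJ : J * J = -1)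
    (hdiag : ∀ i, J i i = 0) {x : A} (hx : x ∈ nonunits A) (s : A) :
    Nat.card {v : UnimodularVec n A // star v.1 ⬝ᵥ J *ᵥ v.1 = s + (x - star x)} =
      Nat.card {v : UnimodularVec n A // star v.1 ⬝ᵥ J *ᵥ v.1 = s} :=
  Nat.card_congr <| ((shift hdiag hx).subtypeEquiv fun v => by
    rw [shift, Equiv.coe_fn_mk, shiftAtPivot,
      dotProduct_mulVec_shiftAt hJ hJJ hdiag x v.isUnit_pivot, add_left_inj]).symm

theorem card_form_eq_of_star_eq_neg {J : Matrix n n A} (hJ : Jᴴ = -J) (hJJ : J * J = -1)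
    (hdiag : ∀ i, J i i = 0) (h2 : IsUnit (2 : A)) (hsk : ∀ a : A, a - star a ∈ nonunits A)
    {s t : A} (hs : star s = -s) (ht : star t = -t) :
    Nat.card {v : UnimodularVec n A // star v.1 ⬝ᵥ J *ᵥ v.1 = t} =
      Nat.card {v : UnimodularVec n A // star v.1 ⬝ᵥ J *ᵥ v.1 = s} := by
  have hts : star (t - s) = -(t - s) := by rw [star_sub, hs, ht, neg_sub_neg, neg_sub]
  obtain ⟨x, hx, hxts⟩ := exists_star_eq_neg_two_mul_eq h2 hts
  have hsub : x - star x = t - s := by rw [hx, sub_neg_eq_add, ← two_mul, hxts]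
  have hxr : x ∈ nonunits A := fun hu => (hsub ▸ hsk x) (hxts ▸ h2.mul hu)
  rw [show t = s + (x - star x) by rw [hsub, add_sub_cancel]]
  exact card_form_eq_add_sub_star hJ hJJ hdiag hxr s

end UnimodularVec

theorem card_form_eq_mul_card_skew {A n : Type*} [Ring A] [StarRing A] [IsLocalRing A] [Finite A]
    [Fintype n] [DecidableEq n] {J : Matrix n n A} (hJ : Jᴴ = -J) (hJJ : J * J = -1)
    (hdiag : ∀ i, J i i = 0) (h2 : IsUnit (2 : A)) (hsk : ∀ a : A, a - star a ∈ nonunits A)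
    {s : A} (hs : star s = -s) :
    Nat.card {v : n → A // (∃ i, IsUnit (v i)) ∧ star v ⬝ᵥ J *ᵥ v = s} *
        Nat.card {a : A // star a = -a} =
      Nat.card A ^ Fintype.card n - Nat.card (nonunits A) ^ Fintype.card n := by
  let len : UnimodularVec n A → {a : A // star a = -a} :=
    fun v => ⟨_, star_dotProduct_mulVec_self_of_conjTranspose_eq_neg hJ v.1⟩
  have hfiber (t : {a : A // star a = -a}) :
      Nat.card {v // len v = t} =
        Nat.card {v : UnimodularVec n A // star v.1 ⬝ᵥ J *ᵥ v.1 = s} :=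
    (Nat.card_congr (Equiv.subtypeEquivRight fun _ => Subtype.ext_iff)).trans
      (UnimodularVec.card_form_eq_of_star_eq_neg hJ hJJ hdiag h2 hsk hs t.2)
  rw [← card_unimodularVec, card_eq_mul_card_of_forall_card_fiber_eq len hfiber,
    ← Nat.card_congr <| Equiv.subtypeSubtypeEquivSubtypeInter
      (fun v : n → A => ∃ i, IsUnit (v i)) fun v => star v ⬝ᵥ J *ᵥ v = s]

section StdSymplectic

variable (A : Type*) [Ring A] (m : ℕ)

def finTwoMulEquivSum : Fin (2 * m) ≃ Fin m ⊕ Fin m :=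
  (finCongr (two_mul m)).trans finSumFinEquiv.symm

theorem stdSymplectic_submatrix_symm :
    (stdSymplectic A m).submatrix (finTwoMulEquivSum m).symm (finTwoMulEquivSum m).symm =
      fromBlocks 0 1 (-1) 0 := by
  ext (a | a) (b | b) <;> simp [stdSymplectic, finTwoMulEquivSum, one_apply, Fin.ext_iff] <;>
    split_ifs <;> first | omega | simp

theorem stdSymplectic_eq_submatrix :
    stdSymplectic A m =
      (fromBlocks 0 1 (-1) 0).submatrix (finTwoMulEquivSum m) (finTwoMulEquivSum m) := by
  rw [← stdSymplectic_submatrix_symm, submatrix_submatrix, Equiv.symm_comp_self, submatrix_id_id]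

theorem stdSymplectic_conjTranspose [StarRing A] : (stdSymplectic A m)ᴴ = -stdSymplectic A m := by
  have hM : (fromBlocks 0 1 (-1) 0 : Matrix (Fin m ⊕ Fin m) (Fin m ⊕ Fin m) A)ᴴ =
      -fromBlocks 0 1 (-1) 0 := by
    simp [fromBlocks_conjTranspose, fromBlocks_neg]
  rw [stdSymplectic_eq_submatrix, conjTranspose_submatrix, hM]
  rfl

theorem stdSymplectic_mul_self : stdSymplectic A m * stdSymplectic A m = -1 := by
  have hM : (fromBlocks 0 1 (-1) 0 : Matrix (Fin m ⊕ Fin m) (Fin m ⊕ Fin m) A) *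
      fromBlocks 0 1 (-1) 0 = -1 := by
    simp [fromBlocks_multiply, ← fromBlocks_one, fromBlocks_neg]
  rw [stdSymplectic_eq_submatrix, submatrix_mul_equiv, hM, submatrix_neg, Pi.neg_apply,
    Pi.neg_apply, submatrix_one_equiv]

theorem stdSymplectic_apply_self (i : Fin (2 * m)) : stdSymplectic A m i i = 0 := by
  have := i.isLt
  simp [stdSymplectic, show m ≠ 0 by omega]

end StdSymplectic

theorem stmt15_general {A : Type*} [Ring A] [StarRing A] [IsLocalRing A] [Finite A]
    (h2 : IsUnit (2 : A)) (hsk : ∀ a : A, a - star a ∈ nonunits A)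
    {m : ℕ}
    (s : A) (hs : star s = -s) :
    Nat.card {v : Fin (2 * m) → A //
        (∃ i, IsUnit (v i)) ∧ star v ⬝ᵥ (stdSymplectic A m).mulVec v = s} *
      Nat.card {a : A // star a = -a} =
      Nat.card A ^ (2 * m) - Nat.card (nonunits A) ^ (2 * m) := by
  simpa using card_form_eq_mul_card_skew (stdSymplectic_conjTranspose A m)
    (stdSymplectic_mul_self A m) (stdSymplectic_apply_self A m) h2 hsk hs

/-- Let `A` be a finite local ring with involution `*` such that `2` is a unit
and `a - a*` is a non-unit for every `a`; let `S = {a : a* = -a}` and `m ≥ 1`.  For every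
`s ∈ S`, the number of unimodular column vectors `v ∈ A^{2m}` of length `vᴴJ₀v = s` equals
`(|A|^{2m} - |r|^{2m}) / |S|` (stated multiplicatively, with `r = nonunits A` the Jacobson
radical); in particular this number does not depend on `s`. -/
theorem stmt15 {A : Type*} [Ring A] [StarRing A] [IsLocalRing A] [Finite A]
    (h2 : IsUnit (2 : A)) (hsk : ∀ a : A, a - star a ∈ nonunits A)
    {m : ℕ} (hm : 1 ≤ m)
    (s : A) (hs : star s = -s) :
    Nat.card {v : Fin (2 * m) → A //
        (∃ i, IsUnit (v i)) ∧ star v ⬝ᵥ (stdSymplectic A m).mulVec v = s} *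
      Nat.card {a : A // star a = -a} =
      Nat.card A ^ (2 * m) - Nat.card (nonunits A) ^ (2 * m) :=
  stmt15_general h2 hsk s hs
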